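/- Let n ≥ 0, let σ_1,…,σ_{n+1} ∈ Σ_{r^m}* be words and w_1,…,w_n ∈ Σ_{r^m}* be nonempty words. Then ρ(σ_{n+1}·w_n·σ_n·w_{n−1}⋯w_1·σ_1) = Γ_{σ_{n+1}⋯σ_1}( Σ_{i=1}^{n} r^{|w_n⋯w_{i+1}|}·(1 − r^{|w_i|})·Γ_{σ_i⋯σ_1}^{-1}(ξ(w_i)) ), where σ_j⋯σ_1 denotes the concatenated word σ_j·σ_{j−1}⋯σ_1, |w_n⋯w_{i+1}| = |w_n| + ⋯ + |w_{i+1}| (equal to 0 when i = n), and the empty sum is the zero vector. -/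
import Mathlib


/-- The alphabet `Σ_{r^m}` of digit vectors. -/
abbrev Alpha (r m : ℕ) := Fin m → Fin r
abbrev Word (r m : ℕ) := List (Alpha r m)

/-- `ρ(b₁⋯bₙ) = Σᵢ r^(i-1)·bᵢ` (least significant digit first), viewed in `ℝ^m`. -/
noncomputable def rho (r m : ℕ) : Word r m → (Fin m → ℝ)
  | [] => 0
  | b :: w => (fun j => (b j : ℝ)) + (r : ℝ) • rho r m w

/-- `Γ_σ(x) = r^|σ|·x + ρ(σ)`. -/
noncomputable def Gam (r m : ℕ) (σ : Word r m) (x : Fin m → ℝ) : Fin m → ℝ :=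
  (r : ℝ) ^ σ.length • x + rho r m σ

/-- The inverse bijection `Γ_σ⁻¹(y) = (y - ρ(σ))/r^|σ|`. -/
noncomputable def GamInv (r m : ℕ) (σ : Word r m) (y : Fin m → ℝ) : Fin m → ℝ :=
  ((r : ℝ) ^ σ.length)⁻¹ • (y - rho r m σ)

/-- `ξ(σ) = ρ(σ)/(1 - r^|σ|)` (meaningful for nonempty `σ`). -/
noncomputable def xi (r m : ℕ) (σ : Word r m) : Fin m → ℝ :=
  (1 - (r : ℝ) ^ σ.length)⁻¹ • rho r m σ

/-- `ρ(L) = {ρ(σ) : σ ∈ L}`. -/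
def rhoSet (r m : ℕ) (L : Set (Word r m)) : Set (Fin m → ℝ) :=
  {x | ∃ σ ∈ L, x = rho r m σ}

/-- `ξ(L) = {ξ(σ) : σ ∈ L, σ ≠ ε}`. -/
def xiSet (r m : ℕ) (L : Set (Word r m)) : Set (Fin m → ℝ) :=
  {x | ∃ σ ∈ L, σ ≠ [] ∧ x = xi r m σ}

/-- Kleene star of a language. -/
def kstar' {α : Type*} (L : Set (List α)) : Set (List α) :=
  {w | ∃ ws : List (List α), (∀ u ∈ ws, u ∈ L) ∧ w = ws.flatten}

/-- Concatenation of two languages. -/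
def catL {α : Type*} (A B : Set (List α)) : Set (List α) :=
  {w | ∃ a ∈ A, ∃ b ∈ B, w = a ++ b}

/-- `chainLang σ Ls n = σ_{n+1}·(L_n)*·σ_n ⋯ (L_1)*·σ_1`. -/
def chainLang {α : Type*} (σ : ℕ → List α) (Ls : ℕ → Set (List α)) : ℕ → Set (List α)
  | 0 => {σ 1}
  | n + 1 => catL {σ (n + 2)} (catL (kstar' (Ls (n + 1))) (chainLang σ Ls n))

/-- `catDown σ hi lo = σ_hi·σ_{hi-1}⋯σ_lo` (empty if `lo > hi`). -/
def catDown {α : Type*} (σ : ℕ → List α) (hi lo : ℕ) : List α :=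
  ((List.range (hi + 1 - lo)).map fun j => σ (hi - j)).flatten

/-- `catUp σ k = σ_1·σ_2⋯σ_k`. -/
def catUp {α : Type*} (σ : ℕ → List α) (k : ℕ) : List α :=
  ((List.range k).map fun j => σ (j + 1)).flatten

/-- `σ^k`, the `k`-fold concatenation of `σ`. -/
def repK {α : Type*} (σ : List α) (k : ℕ) : List α := (List.replicate k σ).flatten

/-- `ℝ₋·X = {t·x : t ≤ 0, x ∈ X}`. -/
def negSmul {m : ℕ} (X : Set (Fin m → ℝ)) : Set (Fin m → ℝ) :=
  {y | ∃ t : ℝ, t ≤ 0 ∧ ∃ x ∈ X, y = t • x}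

/-- The cone `C(R)` generated by a finite set of rays. -/
def coneOf {m : ℕ} (R : Finset ((Fin m → ℝ) × ℝ)) : Set ((Fin m → ℝ) × ℝ) :=
  {y | ∃ t : ((Fin m → ℝ) × ℝ) → ℝ, (∀ p, 0 ≤ t p) ∧ y = ∑ p ∈ R, t p • p}

/-- The polyhedral convex set `P(R) = {x : (x,1) ∈ C(R)}`. -/
def polyOf {m : ℕ} (R : Finset ((Fin m → ℝ) × ℝ)) : Set (Fin m → ℝ) :=
  {x | (x, (1 : ℝ)) ∈ coneOf R}

/-- `interWord σ w n = σ_{n+1}·w_n·σ_n·w_{n-1}⋯w_1·σ_1`. -/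
def interWord {α : Type*} (σ w : ℕ → List α) : ℕ → List α
  | 0 => σ 1
  | j + 1 => σ (j + 2) ++ w (j + 1) ++ interWord σ w j

lemma rho_append (r m : ℕ) (a b : Word r m) :
    rho r m (a ++ b) = rho r m a + (r : ℝ) ^ a.length • rho r m b := by
  induction a with
  | nil => simp [rho]
  | cons x t ih =>
    funext j
    simp [rho, ih, mul_add]
    ring

lemma catDown_one (σ : ℕ → Word 0 0) : True := trivial

lemma catDown_succ {α : Type*} (σ : ℕ → List α) (n : ℕ) :
    catDown σ (n + 2) 1 = σ (n + 2) ++ catDown σ (n + 1) 1 := by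
  unfold catDown
  rw [show n + 2 + 1 - 1 = n + 1 + 1 from rfl, show n + 1 + 1 - 1 = n + 1 from rfl,
    List.range_succ_eq_map, List.map_cons, List.map_map, List.flatten_cons]
  congr 1
  congr 1
  apply List.map_congr_left
  intro j hj
  simp only [Function.comp]
  congr 1
  omega

lemma GamInv_comb (r m : ℕ) (c : Word r m) (t : ℝ) (x y : Fin m → ℝ) :
    GamInv r m c (t • x + (1 - t) • y) =
      t • GamInv r m c x + (1 - t) • GamInv r m c y := by
  simp only [GamInv]
  module

lemma Gam_GamInv (r m : ℕ) (hr : 2 ≤ r) (c : Word r m) (y : Fin m → ℝ) :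
    Gam r m c (GamInv r m c y) = y := by
  have h : ((r : ℝ) ^ c.length) ≠ 0 := by positivity
  simp only [Gam, GamInv, smul_smul, mul_inv_cancel₀ h, one_smul]
  abel

lemma xi_spec (r m : ℕ) (hr : 2 ≤ r) (w : Word r m) (hw : w ≠ []) :
    rho r m w = (1 - (r : ℝ) ^ w.length) • xi r m w := by
  have h1 : (1 : ℝ) < (r : ℝ) ^ w.length := by
    have : (2 : ℝ) ≤ (r : ℝ) := by exact_mod_cast hr
    calc (1 : ℝ) < 2 ^ w.length := by
          apply one_lt_pow₀ one_lt_two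
          simpa using hw
      _ ≤ (r : ℝ) ^ w.length := by
          apply pow_le_pow_left₀ (by norm_num) this
  have h : (1 - (r : ℝ) ^ w.length) ≠ 0 := by linarith
  simp [xi, smul_smul, mul_inv_cancel₀ h]

lemma key_interWord (r m : ℕ) (hr : 2 ≤ r) (n : ℕ) (σ w : ℕ → Word r m)
    (hw : ∀ i ∈ Finset.Icc 1 n, w i ≠ []) :
    GamInv r m (catDown σ (n + 1) 1) (rho r m (interWord σ w n)) =
      ∑ i ∈ Finset.Icc 1 n,
        ((r : ℝ) ^ (∑ j ∈ Finset.Icc (i + 1) n, (w j).length) *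
            (1 - (r : ℝ) ^ (w i).length)) •
          GamInv r m (catDown σ i 1) (xi r m (w i)) := by
  induction n with
  | zero =>
    simp only [Finset.Icc_self, interWord]
    have hc : catDown σ 1 1 = σ 1 := by simp [catDown, List.range_succ]
    simp [hc, GamInv]
  | succ n ih =>
    have hw' : ∀ i ∈ Finset.Icc 1 n, w i ≠ [] := fun i hi => by
      apply hw; simp at hi ⊢; omega
    have hwn : w (n + 1) ≠ [] := hw (n + 1) (by simp)
    set c' := catDown σ (n + 1) 1 with hc'
    have hstep : rho r m (interWord σ w (n + 1)) =
        Gam r m (σ (n + 2))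
          ((r : ℝ) ^ (w (n + 1)).length • rho r m (interWord σ w n) +
            (1 - (r : ℝ) ^ (w (n + 1)).length) • xi r m (w (n + 1))) := by
      show rho r m ((σ (n + 2) ++ w (n + 1)) ++ interWord σ w n) = _
      rw [rho_append, rho_append, Gam, smul_add, smul_smul, ← pow_add,
        xi_spec r m hr _ hwn, List.length_append]
      module
    rw [catDown_succ]
    have hGI : ∀ y, GamInv r m (σ (n + 2) ++ c') (Gam r m (σ (n + 2)) y)
        = GamInv r m c' y := by
      intro y
      have h2 : ((r : ℝ) ^ (σ (n + 2)).length) ≠ 0 := by positivity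
      simp only [GamInv, Gam, List.length_append, rho_append, pow_add, mul_inv]
      rw [show ((r:ℝ) ^ (σ (n+2)).length • y + rho r m (σ (n+2)) -
          (rho r m (σ (n+2)) + (r:ℝ) ^ (σ (n+2)).length • rho r m c'))
          = (r:ℝ) ^ (σ (n+2)).length • (y - rho r m c') by module]
      have hL : ((r : ℝ) ^ c'.length) ≠ 0 := by positivity
      rw [smul_smul]
      congr 1
      field_simp
    rw [hstep, hGI, GamInv_comb, ih hw']
    rw [Finset.smul_sum]
    rw [Finset.sum_Icc_succ_top (by omega : 1 ≤ n + 1)]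
    have hlast : (∑ j ∈ Finset.Icc (n + 1 + 1) (n + 1), (w j).length) = 0 := by
      rw [Finset.Icc_eq_empty (by omega)]; simp
    rw [hlast]
    congr 1
    · apply Finset.sum_congr rfl
      intro i hi
      simp only [Finset.mem_Icc] at hi
      rw [smul_smul]
      congr 1
      rw [Finset.sum_Icc_succ_top (by omega : i + 1 ≤ n + 1), pow_add]
      ring
    · rw [← hc', pow_zero, one_mul]

/-- the explicit formula for `ρ(σ_{n+1}·w_n·σ_n⋯w_1·σ_1)`. -/
theorem rho_interWord
    (r m : ℕ) (hr : 2 ≤ r) (hm : 1 ≤ m)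
    (n : ℕ) (σ w : ℕ → Word r m) (hw : ∀ i ∈ Finset.Icc 1 n, w i ≠ []) :
    rho r m (interWord σ w n) =
      Gam r m (catDown σ (n + 1) 1)
        (∑ i ∈ Finset.Icc 1 n,
          ((r : ℝ) ^ (∑ j ∈ Finset.Icc (i + 1) n, (w j).length) *
              (1 - (r : ℝ) ^ (w i).length)) •
            GamInv r m (catDown σ i 1) (xi r m (w i))) := by
  rw [← key_interWord r m hr n σ w hw, Gam_GamInv r m hr]
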